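/- Let K be a real m×n matrix, d₁,…,dₙ > 0, e₁,…,eₘ > 0, γ, δ ∈ (0,2), r > 0 and s ∈ [0,2]. With the convention 0⁰ = 0, define τ_j = 1/(d_j/γ + r·∑_{i=1}^m |K_{ij}|^{2−s}) and σ_i = 1/(e_i/δ + (1/r)·∑_{j=1}^n |K_{ij}|^s). Let m̄ = max(γ, δ), let ε ∈ (0, (9 − 4m̄)/(2m̄)), and let α satisfy 0 ≤ α < 1 + (√(9 − 4m̄ − 2εm̄) − 3)/m̄. Then 1 − 3α − ε > 0, and for all i, j: (1 − 3α − ε)/σ_i − ((1 − α)²/2)e_i > 0 and (1 − 3α − ε)/τ_j − ((1 − α)²/2)d_j > 0, and for every x ∈ ℝⁿ: ∑_{i=1}^m (1/((1 − 3α − ε)/σ_i − ((1 − α)²/2)e_i))·(∑_{j=1}^n K_{ij} x_j / √((1 − 3α − ε)/τ_j − ((1 − α)²/2)d_j))² ≤ (1/(1 − 3α − ε))²·∑_{j=1}^n x_j². -/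
import Mathlib


open Matrix

/-- `a ^ t` with the convention `0 ^ 0 = 0`. -/
noncomputable def rpow0 (a t : ℝ) : ℝ := if a = 0 then 0 else a ^ t

lemma rpow0_nonneg {a : ℝ} (h : 0 ≤ a) (t : ℝ) : 0 ≤ rpow0 a t := by
  unfold rpow0
  split
  · exact le_refl 0
  · exact Real.rpow_nonneg h t

lemma rpow0_mul_rpow0 {a : ℝ} (h : 0 ≤ a) (s : ℝ) : rpow0 a s * rpow0 a (2 - s) = a ^ 2 := by
  unfold rpow0
  by_cases ha : a = 0
  · simp [ha]
  · rw [if_neg ha, if_neg ha, ← Real.rpow_add (h.lt_of_ne (Ne.symm ha)),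
      show s + (2 - s) = ((2 : ℕ) : ℝ) by norm_num, Real.rpow_natCast]

lemma aux_norm {m n : ℕ} (K : Matrix (Fin m) (Fin n) ℝ) (A : Fin n → ℝ) (B : Fin m → ℝ)
    (C r s : ℝ) (hC : 0 < C) (hr : 0 < r)
    (hApos : ∀ j, 0 < A j) (hBpos : ∀ i, 0 < B i)
    (hAge : ∀ j, C * r * (∑ i, rpow0 |K i j| (2 - s)) ≤ A j)
    (hBge : ∀ i, C * (∑ j, rpow0 |K i j| s) / r ≤ B i)
    (x : Fin n → ℝ) :
    ∑ i, (1 / B i) * (∑ j, K i j * x j / Real.sqrt (A j)) ^ 2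
      ≤ (1 / C) ^ 2 * ∑ j, (x j) ^ 2 := by
  have hQnn : ∀ i : Fin m, (0:ℝ) ≤ ∑ j, rpow0 |K i j| (2 - s) * ((x j) ^ 2 / A j) :=
    fun i => Finset.sum_nonneg fun j _ =>
      mul_nonneg (rpow0_nonneg (abs_nonneg _) _) (div_nonneg (sq_nonneg _) (hApos j).le)
  have key1 : ∀ i : Fin m, (∑ j, K i j * x j / Real.sqrt (A j)) ^ 2
      ≤ (∑ j, rpow0 |K i j| s) * ∑ j, rpow0 |K i j| (2 - s) * ((x j) ^ 2 / A j) := by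
    intro i
    have e1 : ∀ j : Fin n,
        (Real.sqrt (rpow0 |K i j| s) * (if K i j < 0 then (-1:ℝ) else 1)) *
          (Real.sqrt (rpow0 |K i j| (2 - s)) * x j / Real.sqrt (A j))
        = K i j * x j / Real.sqrt (A j) := by
      intro j
      have h1 : Real.sqrt (rpow0 |K i j| s) * Real.sqrt (rpow0 |K i j| (2 - s)) = |K i j| := by
        rw [← Real.sqrt_mul (rpow0_nonneg (abs_nonneg _) _), rpow0_mul_rpow0 (abs_nonneg _),
          Real.sqrt_sq (abs_nonneg _)]
      have hKc : |K i j| * (if K i j < 0 then (-1:ℝ) else 1) = K i j := by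
        by_cases hk : K i j < 0
        · rw [if_pos hk, abs_of_neg hk]; ring
        · rw [if_neg hk, abs_of_nonneg (not_lt.mp hk)]; ring
      calc (Real.sqrt (rpow0 |K i j| s) * (if K i j < 0 then (-1:ℝ) else 1)) *
            (Real.sqrt (rpow0 |K i j| (2 - s)) * x j / Real.sqrt (A j))
          = (Real.sqrt (rpow0 |K i j| s) * Real.sqrt (rpow0 |K i j| (2 - s))) *
              (if K i j < 0 then (-1:ℝ) else 1) * x j / Real.sqrt (A j) := by ring
        _ = |K i j| * (if K i j < 0 then (-1:ℝ) else 1) * x j / Real.sqrt (A j) := by rw [h1]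
        _ = K i j * x j / Real.sqrt (A j) := by rw [hKc]
    have e2 : ∀ j : Fin n,
        (Real.sqrt (rpow0 |K i j| s) * (if K i j < 0 then (-1:ℝ) else 1)) ^ 2
          = rpow0 |K i j| s := by
      intro j
      rw [mul_pow, Real.sq_sqrt (rpow0_nonneg (abs_nonneg _) _)]
      by_cases hk : K i j < 0
      · rw [if_pos hk]; ring
      · rw [if_neg hk]; ring
    have e3 : ∀ j : Fin n,
        (Real.sqrt (rpow0 |K i j| (2 - s)) * x j / Real.sqrt (A j)) ^ 2
          = rpow0 |K i j| (2 - s) * ((x j) ^ 2 / A j) := by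
      intro j
      rw [div_pow, mul_pow, Real.sq_sqrt (rpow0_nonneg (abs_nonneg _) _),
        Real.sq_sqrt (hApos j).le, mul_div_assoc]
    calc (∑ j, K i j * x j / Real.sqrt (A j)) ^ 2
        = (∑ j, (Real.sqrt (rpow0 |K i j| s) * (if K i j < 0 then (-1:ℝ) else 1)) *
            (Real.sqrt (rpow0 |K i j| (2 - s)) * x j / Real.sqrt (A j))) ^ 2 := by
          congr 1; exact Finset.sum_congr rfl fun j _ => (e1 j).symm
      _ ≤ (∑ j, (Real.sqrt (rpow0 |K i j| s) * (if K i j < 0 then (-1:ℝ) else 1)) ^ 2) *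
            ∑ j, (Real.sqrt (rpow0 |K i j| (2 - s)) * x j / Real.sqrt (A j)) ^ 2 :=
          Finset.sum_mul_sq_le_sq_mul_sq Finset.univ _ _
      _ = (∑ j, rpow0 |K i j| s) * ∑ j, rpow0 |K i j| (2 - s) * ((x j) ^ 2 / A j) := by
          rw [Finset.sum_congr rfl fun j _ => e2 j, Finset.sum_congr rfl fun j _ => e3 j]
  have step : ∀ i : Fin m, (1 / B i) * (∑ j, K i j * x j / Real.sqrt (A j)) ^ 2
      ≤ (r / C) * ∑ j, rpow0 |K i j| (2 - s) * ((x j) ^ 2 / A j) := by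
    intro i
    have h1 : (1 / B i) * (∑ j, K i j * x j / Real.sqrt (A j)) ^ 2
        ≤ (1 / B i) * ((∑ j, rpow0 |K i j| s) * ∑ j, rpow0 |K i j| (2 - s) * ((x j) ^ 2 / A j)) :=
      mul_le_mul_of_nonneg_left (key1 i) (one_div_nonneg.mpr (hBpos i).le)
    have hTB : (∑ j, rpow0 |K i j| s) / B i ≤ r / C := by
      rw [div_le_div_iff₀ (hBpos i) hC]
      have := (div_le_iff₀ hr).mp (hBge i)
      linarith
    have h2 : (1 / B i) * ((∑ j, rpow0 |K i j| s) * ∑ j, rpow0 |K i j| (2 - s) * ((x j) ^ 2 / A j))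
        ≤ (r / C) * ∑ j, rpow0 |K i j| (2 - s) * ((x j) ^ 2 / A j) := by
      rw [show (1 / B i) * ((∑ j, rpow0 |K i j| s) * ∑ j, rpow0 |K i j| (2 - s) * ((x j) ^ 2 / A j))
          = ((∑ j, rpow0 |K i j| s) / B i) * ∑ j, rpow0 |K i j| (2 - s) * ((x j) ^ 2 / A j) by ring]
      exact mul_le_mul_of_nonneg_right hTB (hQnn i)
    exact h1.trans h2
  calc ∑ i, (1 / B i) * (∑ j, K i j * x j / Real.sqrt (A j)) ^ 2
      ≤ ∑ i, (r / C) * ∑ j, rpow0 |K i j| (2 - s) * ((x j) ^ 2 / A j) :=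
        Finset.sum_le_sum fun i _ => step i
    _ = (r / C) * ∑ j, (∑ i, rpow0 |K i j| (2 - s)) * ((x j) ^ 2 / A j) := by
        rw [← Finset.mul_sum]
        congr 1
        rw [Finset.sum_comm]
        exact Finset.sum_congr rfl fun j _ => (Finset.sum_mul _ _ _).symm
    _ ≤ (r / C) * ∑ j, (A j / (C * r)) * ((x j) ^ 2 / A j) := by
        apply mul_le_mul_of_nonneg_left _ (div_nonneg hr.le hC.le)
        apply Finset.sum_le_sum
        intro j _
        apply mul_le_mul_of_nonneg_right _ (div_nonneg (sq_nonneg _) (hApos j).le)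
        rw [le_div_iff₀ (by positivity : (0:ℝ) < C * r)]
        linarith [hAge j]
    _ = (1 / C) ^ 2 * ∑ j, (x j) ^ 2 := by
        rw [Finset.mul_sum, Finset.mul_sum]
        refine Finset.sum_congr rfl fun j _ => ?_
        have hAj : A j ≠ 0 := (hApos j).ne'
        field_simp

set_option maxHeartbeats 1000000 in
/-- the diagonal preconditioning rule satisfies the
extrapolation-dependent positivity and norm conditions for every extrapolation factor
`α` below the explicit bound `1 + (√(9 − 4m̄ − 2εm̄) − 3)/m̄`, where `m̄ = max γ δ`. -/
theorem stmt15 {m n : ℕ} (K : Matrix (Fin m) (Fin n) ℝ)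
    (d : Fin n → ℝ) (e : Fin m → ℝ) (hd : ∀ j, 0 < d j) (he : ∀ i, 0 < e i)
    (γ δ r s : ℝ) (hγ : γ ∈ Set.Ioo (0:ℝ) 2) (hδ : δ ∈ Set.Ioo (0:ℝ) 2)
    (hr : 0 < r) (hs : s ∈ Set.Icc (0:ℝ) 2)
    (τ : Fin n → ℝ) (σ : Fin m → ℝ)
    (hτ : ∀ j, τ j = 1 / (d j / γ + r * ∑ i, rpow0 |K i j| (2 - s)))
    (hσ : ∀ i, σ i = 1 / (e i / δ + (1/r) * ∑ j, rpow0 |K i j| s))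
    (mbar : ℝ) (hmbar : mbar = max γ δ)
    (ε : ℝ) (hε : ε ∈ Set.Ioo (0:ℝ) ((9 - 4*mbar) / (2*mbar)))
    (α : ℝ) (hα0 : 0 ≤ α)
    (hα1 : α < 1 + (Real.sqrt (9 - 4*mbar - 2*ε*mbar) - 3) / mbar) :
    0 < 1 - 3*α - ε ∧
      (∀ i, 0 < (1 - 3*α - ε) / σ i - (1 - α)^2 / 2 * e i) ∧
      (∀ j, 0 < (1 - 3*α - ε) / τ j - (1 - α)^2 / 2 * d j) ∧
      ∀ x : Fin n → ℝ,
        ∑ i, (1 / ((1 - 3*α - ε) / σ i - (1 - α)^2 / 2 * e i))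
            * (∑ j, K i j * x j
                / Real.sqrt ((1 - 3*α - ε) / τ j - (1 - α)^2 / 2 * d j))^2
          ≤ (1 / (1 - 3*α - ε))^2 * ∑ j, (x j)^2 := by
  have hγm : γ ≤ mbar := by rw [hmbar]; exact le_max_left _ _
  have hδm : δ ≤ mbar := by rw [hmbar]; exact le_max_right _ _
  have hm0 : 0 < mbar := lt_of_lt_of_le hγ.1 hγm
  have hm2 : mbar < 2 := by rw [hmbar]; exact max_lt hγ.2 hδ.2
  have hεd := (lt_div_iff₀ (by positivity : (0:ℝ) < 2*mbar)).mp hε.2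
  have harg : 0 < 9 - 4*mbar - 2*ε*mbar := by nlinarith
  have ht2 : (Real.sqrt (9 - 4*mbar - 2*ε*mbar)) ^ 2 = 9 - 4*mbar - 2*ε*mbar :=
    Real.sq_sqrt harg.le
  have ht3 : Real.sqrt (9 - 4*mbar - 2*ε*mbar) < 3 := by
    have h9 : (9:ℝ) - 4*mbar - 2*ε*mbar < 9 := by nlinarith [hε.1]
    calc Real.sqrt (9 - 4*mbar - 2*ε*mbar) < Real.sqrt 9 := Real.sqrt_lt_sqrt harg.le h9
      _ = 3 := by rw [show (9:ℝ) = 3^2 by norm_num, Real.sqrt_sq (by norm_num)]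
  have hαlt1 : α < 1 := by
    have hneg : (Real.sqrt (9 - 4*mbar - 2*ε*mbar) - 3) / mbar < 0 :=
      div_neg_of_neg_of_pos (by linarith) hm0
    linarith
  have ht : 3 - (1-α)*mbar < Real.sqrt (9 - 4*mbar - 2*ε*mbar) := by
    have h := (lt_div_iff₀ hm0).mp
      (by linarith : α - 1 < (Real.sqrt (9 - 4*mbar - 2*ε*mbar) - 3) / mbar)
    linarith
  have hpos3 : 0 < 3 - (1-α)*mbar := by nlinarith
  have hsq : (3 - (1-α)*mbar)^2 < 9 - 4*mbar - 2*ε*mbar := by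
    have h := mul_self_lt_mul_self hpos3.le ht
    nlinarith
  have hkey : mbar * (1-α)^2 / 2 < 1 - 3*α - ε := by nlinarith
  have hC : 0 < 1 - 3*α - ε := by nlinarith [sq_nonneg (1-α)]
  have hT0 : ∀ i, (0:ℝ) ≤ ∑ j, rpow0 |K i j| s :=
    fun i => Finset.sum_nonneg fun j _ => rpow0_nonneg (abs_nonneg _) _
  have hS0 : ∀ j, (0:ℝ) ≤ ∑ i, rpow0 |K i j| (2-s) :=
    fun j => Finset.sum_nonneg fun i _ => rpow0_nonneg (abs_nonneg _) _
  have hσi : ∀ i, (1 - 3*α - ε) / σ i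
      = (1 - 3*α - ε) * (e i / δ + (1/r) * ∑ j, rpow0 |K i j| s) := by
    intro i
    rw [hσ i, div_div_eq_mul_div, div_one]
  have hτi : ∀ j, (1 - 3*α - ε) / τ j
      = (1 - 3*α - ε) * (d j / γ + r * ∑ i, rpow0 |K i j| (2-s)) := by
    intro j
    rw [hτ j, div_div_eq_mul_div, div_one]
  have hCδ : (1-α)^2 / 2 * δ < 1 - 3*α - ε := by
    nlinarith [mul_nonneg (by positivity : (0:ℝ) ≤ (1-α)^2/2) (sub_nonneg.mpr hδm)]
  have hCγ : (1-α)^2 / 2 * γ < 1 - 3*α - ε := by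
    nlinarith [mul_nonneg (by positivity : (0:ℝ) ≤ (1-α)^2/2) (sub_nonneg.mpr hγm)]
  have hB1 : ∀ i, (1-α)^2 / 2 * e i < (1 - 3*α - ε) * (e i / δ) := by
    intro i
    have hb : (1-α)^2/2 < (1 - 3*α - ε) / δ := (lt_div_iff₀ hδ.1).mpr hCδ
    calc (1-α)^2 / 2 * e i < ((1 - 3*α - ε) / δ) * e i :=
          mul_lt_mul_of_pos_right hb (he i)
      _ = (1 - 3*α - ε) * (e i / δ) := by ring
  have hA1 : ∀ j, (1-α)^2 / 2 * d j < (1 - 3*α - ε) * (d j / γ) := by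
    intro j
    have hb : (1-α)^2/2 < (1 - 3*α - ε) / γ := (lt_div_iff₀ hγ.1).mpr hCγ
    calc (1-α)^2 / 2 * d j < ((1 - 3*α - ε) / γ) * d j :=
          mul_lt_mul_of_pos_right hb (hd j)
      _ = (1 - 3*α - ε) * (d j / γ) := by ring
  have hBpos : ∀ i, 0 < (1 - 3*α - ε) / σ i - (1-α)^2 / 2 * e i := by
    intro i
    rw [hσi i]
    have h2 : 0 ≤ (1 - 3*α - ε) * ((1/r) * ∑ j, rpow0 |K i j| s) :=
      mul_nonneg hC.le (mul_nonneg (by positivity) (hT0 i))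
    nlinarith [hB1 i]
  have hApos : ∀ j, 0 < (1 - 3*α - ε) / τ j - (1-α)^2 / 2 * d j := by
    intro j
    have h2 : 0 ≤ (1 - 3*α - ε) * (r * ∑ i, rpow0 |K i j| (2-s)) :=
      mul_nonneg hC.le (mul_nonneg hr.le (hS0 j))
    rw [hτi j]
    nlinarith [hA1 j]
  refine ⟨hC, hBpos, hApos, ?_⟩
  intro x
  have hBge : ∀ i, (1 - 3*α - ε) * (∑ j, rpow0 |K i j| s) / r
      ≤ (1 - 3*α - ε) / σ i - (1-α)^2 / 2 * e i := by
    intro i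
    rw [hσi i]
    have hexp : (1 - 3*α - ε) * (e i / δ + (1/r) * ∑ j, rpow0 |K i j| s)
        - (1-α)^2 / 2 * e i - (1 - 3*α - ε) * (∑ j, rpow0 |K i j| s) / r
        = (1 - 3*α - ε) * (e i / δ) - (1-α)^2 / 2 * e i := by ring
    nlinarith [hB1 i, hexp]
  have hAge : ∀ j, (1 - 3*α - ε) * r * (∑ i, rpow0 |K i j| (2-s))
      ≤ (1 - 3*α - ε) / τ j - (1-α)^2 / 2 * d j := by
    intro j
    rw [hτi j]
    have hexp : (1 - 3*α - ε) * (d j / γ + r * ∑ i, rpow0 |K i j| (2-s))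
        - (1-α)^2 / 2 * d j - (1 - 3*α - ε) * r * (∑ i, rpow0 |K i j| (2-s))
        = (1 - 3*α - ε) * (d j / γ) - (1-α)^2 / 2 * d j := by ring
    nlinarith [hA1 j, hexp]
  exact aux_norm K (fun j => (1 - 3*α - ε) / τ j - (1-α)^2 / 2 * d j)
    (fun i => (1 - 3*α - ε) / σ i - (1-α)^2 / 2 * e i)
    (1 - 3*α - ε) r s hC hr hApos hBpos hAge hBge x
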